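/- If a three-valued matrix M is paraconsistent, has properties (a) containment in classical logic, (b) proper basic connectives, (e) internalized consistency, (f) internalized logical equivalence, and (g) the sixteen logical-equivalence laws, and moreover satisfies the double-negation law ¬¬A ≡_M A for all formulas A, then the consequence relation ⊨_M coincides with the consequence relation ⊨_L of the matrix L of LP→⊥. (This is the paper's Uniqueness corollary: LP→⊥ is the only three-valued paraconsistent propositional logic with these properties and the double-negation law.) -/

import Mathlib

set_option autoImplicit true
set_option maxHeartbeats 1000000

/-- The three truth values of LP→⊥: true, false, both. -/
inductive V3 : Type
  | t
  | f
  | b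
  deriving DecidableEq

/-- Formulas of LP→⊥ over propositional variables of type `α`. -/
inductive Fml (α : Type) : Type
  | var : α → Fml α
  | bot : Fml α
  | neg : Fml α → Fml α
  | conj : Fml α → Fml α → Fml α
  | disj : Fml α → Fml α → Fml α
  | imp : Fml α → Fml α → Fml α

namespace Fml

/-- ⊤ abbreviates ¬⊥. -/
def top {α : Type} : Fml α := neg bot

/-- A↔B abbreviates (A→B)∧(B→A). -/
def iff' {α : Type} (A B : Fml α) : Fml α := conj (imp A B) (imp B A)

end Fml

/-- LP→⊥ truth table for negation. -/
def negT : V3 → V3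
  | .f => .t
  | .t => .f
  | .b => .b

/-- LP→⊥ truth table for conjunction. -/
def conjT : V3 → V3 → V3
  | .f, _ => .f
  | _, .f => .f
  | .t, .t => .t
  | _, _ => .b

/-- LP→⊥ truth table for disjunction. -/
def disjT : V3 → V3 → V3
  | .t, _ => .t
  | _, .t => .t
  | .f, .f => .f
  | _, _ => .b

/-- LP→⊥ truth table for implication. -/
def impT : V3 → V3 → V3
  | .f, _ => .t
  | _, y => y

/-- The LP→⊥ valuation determined by an assignment `σ` of truth values to variables. -/
def eval {α : Type} (σ : α → V3) : Fml α → V3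
  | .var x => σ x
  | .bot => .f
  | .neg A => negT (eval σ A)
  | .conj A B => conjT (eval σ A) (eval σ B)
  | .disj A B => disjT (eval σ A) (eval σ B)
  | .imp A B => impT (eval σ A) (eval σ B)

/-- Logical equivalence in LP→⊥: the same value under every valuation. -/
def FEquiv {α : Type} (A B : Fml α) : Prop := ∀ σ : α → V3, eval σ A = eval σ B

/-- `φ ∈ [⊥]`: `φ` is logically equivalent to ⊥. -/
def EqBot {α : Type} (φ : Fml α) : Prop := ∀ σ : α → V3, eval σ φ = V3.f

/-- Semantic consequence in LP→⊥ (designated values t and b). -/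
def SemCons {α : Type} (Γ : Set (Fml α)) (A : Fml α) : Prop :=
  ∀ σ : α → V3, (∀ C ∈ Γ, eval σ C ≠ V3.f) → eval σ A ≠ V3.f

/-- A three-valued matrix for the signature ⊥, ¬, ∧, ∨, → with values {t,f,b}
(the designated values being t and b). -/
structure Mtx : Type where
  bot : V3
  neg : V3 → V3
  conj : V3 → V3 → V3
  disj : V3 → V3 → V3
  imp : V3 → V3 → V3

/-- The M-valuation extending the assignment `σ` of values to variables. -/
def MEval (M : Mtx) (σ : ℕ → V3) : Fml ℕ → V3
  | .var x => σ x
  | .bot => M.bot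
  | .neg A => M.neg (MEval M σ A)
  | .conj A B => M.conj (MEval M σ A) (MEval M σ B)
  | .disj A B => M.disj (MEval M σ A) (MEval M σ B)
  | .imp A B => M.imp (MEval M σ A) (MEval M σ B)

/-- The consequence relation ⊨_M of the matrix M (designated values t and b). -/
def MCons (M : Mtx) (Γ : Set (Fml ℕ)) (A : Fml ℕ) : Prop :=
  ∀ σ : ℕ → V3, (∀ C ∈ Γ, MEval M σ C ≠ V3.f) → MEval M σ A ≠ V3.f

/-- M-equivalence: the same value under every M-valuation. -/
def MEquiv (M : Mtx) (A B : Fml ℕ) : Prop := ∀ σ : ℕ → V3, MEval M σ A = MEval M σ B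

/-- Classical (two-valued) evaluation of formulas. -/
def clEval (σ : ℕ → Bool) : Fml ℕ → Bool
  | .var x => σ x
  | .bot => false
  | .neg A => !(clEval σ A)
  | .conj A B => clEval σ A && clEval σ B
  | .disj A B => clEval σ A || clEval σ B
  | .imp A B => !(clEval σ A) || clEval σ B

/-- Classical consequence ⊨_CL. -/
def CLCons (Γ : Set (Fml ℕ)) (A : Fml ℕ) : Prop :=
  ∀ σ : ℕ → Bool, (∀ C ∈ Γ, clEval σ C = true) → clEval σ A = true

/-- M is paraconsistent: some B does not follow from some {A, ¬A}. -/
def Paraconsistent (M : Mtx) : Prop :=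
  ∃ A B : Fml ℕ, ¬ MCons M ({A, A.neg} : Set (Fml ℕ)) B

/-- The internalization (A↔B)∧(¬A↔¬B) of logical equivalence. -/
def InternEq (φ ψ : Fml ℕ) : Fml ℕ :=
  (Fml.iff' φ ψ).conj (Fml.iff' φ.neg ψ.neg)

/-- Property (a): containment in classical logic. -/
def PropA (M : Mtx) : Prop := ∀ (Γ : Set (Fml ℕ)) (A : Fml ℕ), MCons M Γ A → CLCons Γ A

/-- Property (b): proper basic connectives. -/
def PropB (M : Mtx) : Prop :=
  (∀ (Γ : Set (Fml ℕ)) (A B : Fml ℕ), MCons M (insert A Γ) B ↔ MCons M Γ (A.imp B)) ∧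
  (∀ (Γ : Set (Fml ℕ)) (A B : Fml ℕ), MCons M Γ (A.conj B) ↔ (MCons M Γ A ∧ MCons M Γ B)) ∧
  (∀ (Γ : Set (Fml ℕ)) (A B C : Fml ℕ),
    MCons M (insert (A.disj B) Γ) C ↔ (MCons M (insert A Γ) C ∧ MCons M (insert B Γ) C))

/-- Property (e): internalized notion of consistency. -/
def PropE (M : Mtx) : Prop :=
  ∀ A : Fml ℕ,
    (∀ σ : ℕ → V3, MEval M σ A ≠ V3.b) ↔
      MCons M (∅ : Set (Fml ℕ)) ((A.imp .bot).disj (A.neg.imp .bot))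

/-- Property (f): internalized notion of logical equivalence. -/
def PropF (M : Mtx) : Prop :=
  ∀ A B : Fml ℕ, MEquiv M A B ↔ MCons M (∅ : Set (Fml ℕ)) (InternEq A B)

/-- Property (g): the sixteen logical-equivalence laws. -/
def PropG (M : Mtx) : Prop :=
  ∀ A B C : Fml ℕ,
    MEquiv M (A.conj .bot) .bot ∧
    MEquiv M (A.disj Fml.top) Fml.top ∧
    MEquiv M (A.conj Fml.top) A ∧
    MEquiv M (A.disj .bot) A ∧
    MEquiv M (A.conj A) A ∧
    MEquiv M (A.disj A) A ∧
    MEquiv M (A.conj B) (B.conj A) ∧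
    MEquiv M (A.disj B) (B.disj A) ∧
    MEquiv M ((A.conj B).conj C) (A.conj (B.conj C)) ∧
    MEquiv M ((A.disj B).disj C) (A.disj (B.disj C)) ∧
    MEquiv M (A.conj (B.disj C)) ((A.conj B).disj (A.conj C)) ∧
    MEquiv M (A.disj (B.conj C)) ((A.disj B).conj (A.disj C)) ∧
    MEquiv M ((A.imp B).conj (A.imp C)) (A.imp (B.conj C)) ∧
    MEquiv M ((A.imp C).conj (B.imp C)) ((A.disj B).imp C) ∧
    MEquiv M ((A.disj A.neg).imp B) B ∧
    MEquiv M (A.imp (B.imp C)) ((A.conj B).imp C)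

/-- A three-valued paraconsistent matrix with properties (a), (b), (e), (f), (g). -/
def GoodMtx (M : Mtx) : Prop :=
  Paraconsistent M ∧ PropA M ∧ PropB M ∧ PropE M ∧ PropF M ∧ PropG M

/-- The matrix L of LP→⊥. -/
def LPM : Mtx := ⟨V3.f, negT, conjT, disjT, impT⟩

/-!
Property (a) forces `⊥ = f` and yields a designated value that `¬` sends to `f`. By the
double-negation law `¬` is an involution, and (e) applied to `⊤` rules out that this value is `b`;
so `¬` is the negation of LP. With `⊥ = f` and `⊤ = t`, the unit, absorption, idempotence and
commutativity laws of (g) fix the tables of `∧` and `∨`, and `(A ∨ ¬A) → B ≡ B` gives `x → y = y`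
for designated `x`. Finally `⊥ → ⊥` is valid by (b) and not `b` by (a) (its negation would be
valid), and the distribution laws of `→` over `∧` then force `f → y = t`. Hence `M` is `L` itself.
-/

section

variable {M : Mtx}

theorem mcons_empty_iff {A : Fml ℕ} : MCons M ∅ A ↔ ∀ σ, MEval M σ A ≠ .f := by
  simp [MCons]

theorem PropA.bot_eq_f (hA : PropA M) : M.bot = .f := by
  by_contra h
  simpa [CLCons, clEval] using hA ∅ .bot (mcons_empty_iff.2 fun _ => h)

theorem PropA.exists_neg_eq_f (hA : PropA M) : ∃ x ≠ .f, M.neg x = .f := by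
  by_contra! h
  have hvalid : MCons M {.var 0} (Fml.var 0).neg := fun σ hσ => h _ (hσ _ rfl)
  simpa [CLCons, clEval] using hA _ _ hvalid (fun _ => true)

theorem PropA.not_imp_bot_bot_valid (hA : PropA M) : ¬ MCons M ∅ (Fml.imp .bot .bot).neg := by
  intro h
  simpa [CLCons, clEval] using hA _ _ h (fun _ => true)

theorem PropB.imp_self_ne_f (hB : PropB M) (x : V3) : M.imp x x ≠ .f :=
  mcons_empty_iff.1 ((hB.1 ∅ (.var 0) (.var 0)).1 fun _ h => h _ (Set.mem_insert _ _)) fun _ => x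

def assign3 (x y z : V3) : ℕ → V3
  | 0 => x
  | 1 => y
  | _ => z

namespace PropG

variable (x y z : V3)

theorem conj_bot (hG : PropG M) : M.conj x M.bot = M.bot :=
  (hG (.var 0) (.var 0) (.var 0)).1 (assign3 x x x)

theorem disj_top (hG : PropG M) : M.disj x (M.neg M.bot) = M.neg M.bot :=
  (hG (.var 0) (.var 0) (.var 0)).2.1 (assign3 x x x)

theorem conj_top (hG : PropG M) : M.conj x (M.neg M.bot) = x :=
  (hG (.var 0) (.var 0) (.var 0)).2.2.1 (assign3 x x x)

theorem disj_bot (hG : PropG M) : M.disj x M.bot = x :=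
  (hG (.var 0) (.var 0) (.var 0)).2.2.2.1 (assign3 x x x)

theorem conj_self (hG : PropG M) : M.conj x x = x :=
  (hG (.var 0) (.var 0) (.var 0)).2.2.2.2.1 (assign3 x x x)

theorem disj_self (hG : PropG M) : M.disj x x = x :=
  (hG (.var 0) (.var 0) (.var 0)).2.2.2.2.2.1 (assign3 x x x)

theorem conj_comm (hG : PropG M) : M.conj x y = M.conj y x :=
  (hG (.var 0) (.var 1) (.var 1)).2.2.2.2.2.2.1 (assign3 x y y)

theorem disj_comm (hG : PropG M) : M.disj x y = M.disj y x :=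
  (hG (.var 0) (.var 1) (.var 1)).2.2.2.2.2.2.2.1 (assign3 x y y)

theorem conj_imp_imp_left (hG : PropG M) :
    M.conj (M.imp x y) (M.imp x z) = M.imp x (M.conj y z) :=
  (hG (.var 0) (.var 1) (.var 2)).2.2.2.2.2.2.2.2.2.2.2.2.1 (assign3 x y z)

theorem conj_imp_imp_right (hG : PropG M) :
    M.conj (M.imp x z) (M.imp y z) = M.imp (M.disj x y) z :=
  (hG (.var 0) (.var 1) (.var 2)).2.2.2.2.2.2.2.2.2.2.2.2.2.1 (assign3 x y z)

theorem imp_excluded_middle (hG : PropG M) : M.imp (M.disj x (M.neg x)) y = y :=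
  (hG (.var 0) (.var 1) (.var 1)).2.2.2.2.2.2.2.2.2.2.2.2.2.2.1 (assign3 x y y)

end PropG

theorem conjT_eq_t_iff {x y : V3} : conjT x y = .t ↔ x = .t ∧ y = .t := by
  cases x <;> cases y <;> decide

/-- If `¬` swapped `b` and `f`, then `⊤` would take the value `b` although (e) certifies it
consistent: `⊤ → ⊥` takes the value `f` and `¬⊤ → ⊥` the designated value of `⊥ → ⊥`. -/
theorem PropE.neg_b_ne_f (hE : PropE M) (hG : PropG M) (hbot : M.bot = .f)
    (hinv : Function.Involutive M.neg) (hself : ∀ x, M.imp x x ≠ .f) : M.neg .b ≠ .f := by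
  intro hnb
  have hnf : M.neg .f = .b := by rw [← hnb, hinv]
  have hbf : M.imp .b .f = .f := by
    have hdisj_bf : M.disj .b .f = .b := hbot ▸ hG.disj_bot .b
    simpa only [hnb, hdisj_bf] using hG.imp_excluded_middle .b .f
  have hconsistent : MCons M ∅ ((Fml.top.imp .bot).disj (Fml.top.neg.imp .bot)) := by
    refine mcons_empty_iff.2 fun _ => ?_
    simp only [MEval, Fml.top, hbot, hnf, hnb, hbf]
    rw [hG.disj_comm, ← hbot, hG.disj_bot, hbot]
    exact hself .f
  exact (hE Fml.top).2 hconsistent (fun _ => .t) (by simp only [MEval, Fml.top, hbot, hnf])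

theorem neg_eq_negT (hA : PropA M) (hB : PropB M) (hE : PropE M) (hG : PropG M)
    (hinv : Function.Involutive M.neg) : M.neg = negT := by
  obtain ⟨x, hxf, hx⟩ := hA.exists_neg_eq_f
  have hnt : M.neg .t = .f := by
    cases x
    · exact hx
    · exact absurd rfl hxf
    · exact absurd hx (hE.neg_b_ne_f hG hA.bot_eq_f hinv hB.imp_self_ne_f)
  have hnf : M.neg .f = .t := by rw [← hnt, hinv]
  have hnb : M.neg .b = .b := by
    cases h : M.neg .b
    · exact absurd (hinv.injective (h.trans hnf.symm)) (by decide)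
    · exact absurd (hinv.injective (h.trans hnt.symm)) (by decide)
    · rfl
  funext v
  cases v <;> assumption

theorem conj_eq_conjT (hG : PropG M) (hbot : M.bot = .f) (hnf : M.neg .f = .t) :
    M.conj = conjT := by
  have hf (x : V3) : M.conj x .f = .f := by simpa only [hbot] using hG.conj_bot x
  have ht (x : V3) : M.conj x .t = x := by simpa only [hbot, hnf] using hG.conj_top x
  funext u v
  cases u <;> cases v <;> first
    | exact hG.conj_self _ | exact hf _ | exact ht _
    | (rw [hG.conj_comm]; first | exact hf _ | exact ht _)

theorem disj_eq_disjT (hG : PropG M) (hbot : M.bot = .f) (hnf : M.neg .f = .t) :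
    M.disj = disjT := by
  have hf (x : V3) : M.disj x .f = x := by simpa only [hbot] using hG.disj_bot x
  have ht (x : V3) : M.disj x .t = .t := by simpa only [hbot, hnf] using hG.disj_top x
  funext u v
  cases u <;> cases v <;> first
    | exact hG.disj_self _ | exact hf _ | exact ht _
    | (rw [hG.disj_comm]; first | exact hf _ | exact ht _)

theorem imp_eq_impT (hA : PropA M) (hB : PropB M) (hG : PropG M) (hneg : M.neg = negT)
    (hconj : M.conj = conjT) (hdisj : M.disj = disjT) : M.imp = impT := by
  have hbot := hA.bot_eq_f
  have ht (y : V3) : M.imp .t y = y := by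
    simpa only [hdisj, hneg, negT, disjT] using hG.imp_excluded_middle .t y
  have hb (y : V3) : M.imp .b y = y := by
    simpa only [hdisj, hneg, negT, disjT] using hG.imp_excluded_middle .b y
  have hff : M.imp .f .f = .t := by
    cases h : M.imp .f .f
    · rfl
    · exact absurd h (hB.imp_self_ne_f .f)
    · refine absurd (mcons_empty_iff.2 fun _ => ?_) hA.not_imp_bot_bot_valid
      simp only [MEval, hbot, h, hneg]
      decide
  have hft : M.imp .f .t = .t := by
    have h := hG.conj_imp_imp_right .t .f .t
    simp only [hconj, hdisj, disjT, ht] at h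
    exact (conjT_eq_t_iff.1 h).2
  have hfb : M.imp .f .b = .t := by
    have h := hG.conj_imp_imp_left .f .f .b
    rw [hconj, show conjT .f .b = .f from rfl, hff] at h
    exact (conjT_eq_t_iff.1 h).2
  funext u v
  cases u
  · exact ht v
  · cases v <;> assumption
  · exact hb v

end

/-- Uniqueness: any three-valued paraconsistent matrix with properties (a), (b),
(e), (f), (g) and the double-negation law has the consequence relation of LP→⊥. -/
theorem uniqueness (M : Mtx) (hM : GoodMtx M)
    (hdneg : ∀ A : Fml ℕ, MEquiv M A.neg.neg A) :
    MCons M = MCons LPM := by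
  obtain ⟨-, hA, hB, hE, -, hG⟩ := hM
  have hinv : Function.Involutive M.neg := fun x => hdneg (.var 0) fun _ => x
  have hneg := neg_eq_negT hA hB hE hG hinv
  have hnf : M.neg .f = .t := congrFun hneg .f
  have hbot := hA.bot_eq_f
  have hconj := conj_eq_conjT hG hbot hnf
  have hdisj := disj_eq_disjT hG hbot hnf
  have himp := imp_eq_impT hA hB hG hneg hconj hdisj
  obtain ⟨_, _, _, _, _⟩ := M
  subst hbot hneg hconj hdisj himp
  rfl
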